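/- arXiv:1805.09685 — 2 statements merged into one kernel-verified Lean document; each statement's English description precedes it below -/
import Mathlib

section
/- Let ω be a weight function with γ(ω) > 0. Then γ(ω) + 1 = γ((ω^ι)_⋆) as an equality in [0,+∞], where (ω^ι)_⋆(t) := inf_{s>0}(ω(1/s) + ts) for t ≥ 0 is the lower Legendre conjugate of ω^ι(s) := ω(1/s). -/
open Filter MeasureTheory Set Asymptotics

noncomputable section

/-- A *weight function*: continuous and nondecreasing on `[0,∞)`, vanishing at `0`,
and tending to `+∞` at `+∞`. -/
structure IsWeightFunction (ω : ℝ → ℝ) : Prop where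
  continuousOn : ContinuousOn ω (Set.Ici 0)
  monotoneOn : MonotoneOn ω (Set.Ici 0)
  map_zero : ω 0 = 0
  tendsto_atTop : Filter.Tendsto ω Filter.atTop Filter.atTop

/-- Condition `(P_{ω,γ})`: there is `K > 1` with `limsup_{t→∞} ω(K^γ t)/ω(t) < K`,
expressed through an eventual bound by some `c < K`. -/
def Pcond (ω : ℝ → ℝ) (γ : ℝ) : Prop :=
  ∃ K : ℝ, 1 < K ∧ ∃ c : ℝ, c < K ∧ ∀ᶠ t : ℝ in Filter.atTop, ω (K ^ γ * t) / ω t ≤ c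

/-- The growth index `γ(ω) ∈ [0,+∞]`, with `sup ∅ = 0`. -/
noncomputable def gammaIndex (ω : ℝ → ℝ) : ENNReal :=
  ⨆ γ ∈ {γ : ℝ | 0 < γ ∧ Pcond ω γ}, ENNReal.ofReal γ

/-- Condition `(ω₁)`. -/
def Omega1 (ω : ℝ → ℝ) : Prop :=
  ∃ L : ℝ, 1 ≤ L ∧ ∀ t : ℝ, 0 ≤ t → ω (2 * t) ≤ L * (ω t + 1)

/-- Condition `(ω₃)`: `log t = o(ω t)` as `t → ∞`. -/
def Omega3 (ω : ℝ → ℝ) : Prop :=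
  (fun t : ℝ => Real.log t) =o[Filter.atTop] ω

/-- Condition `(ω₄)`: `t ↦ ω (exp t)` is convex on `ℝ`. -/
def Omega4 (ω : ℝ → ℝ) : Prop :=
  ConvexOn ℝ Set.univ (fun t : ℝ => ω (Real.exp t))

/-- Condition `(ω₅)`: `ω t = o(t)` as `t → ∞`. -/
def Omega5 (ω : ℝ → ℝ) : Prop :=
  ω =o[Filter.atTop] (fun t : ℝ => t)

/-- Condition `(ω_snq)`. -/
def OmegaSnq (ω : ℝ → ℝ) : Prop :=
  ∃ C : ℝ, 0 < C ∧ ∀ y : ℝ, 0 < y →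
    (∫⁻ t in Set.Ioi (1:ℝ), ENNReal.ofReal (ω (y * t) / t ^ 2)) ≤
      ENNReal.ofReal (C * (ω y + 1))

/-- `ω ∈ W₀`: normalized weight function with `(ω₃)` and `(ω₄)`. -/
def InW0 (ω : ℝ → ℝ) : Prop :=
  IsWeightFunction ω ∧ (∀ t ∈ Set.Icc (0:ℝ) 1, ω t = 0) ∧ Omega3 ω ∧ Omega4 ω

/-- The Legendre–Fenchel–Young conjugate `φ*_ω(x) = sup {x y − ω(e^y) : y ≥ 0}`. -/
noncomputable def phiStar (ω : ℝ → ℝ) (x : ℝ) : ℝ :=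
  sSup ((fun y : ℝ => x * y - ω (Real.exp y)) '' Set.Ici 0)

/-- The associated weight matrix `W^l_j = exp((1/l) φ*_ω(l j))`. -/
noncomputable def Wseq (ω : ℝ → ℝ) (l : ℝ) (j : ℕ) : ℝ :=
  Real.exp ((1 / l) * phiStar ω (l * (j : ℝ)))

/-- `w^l_j = W^l_j / j!`. -/
noncomputable def wseq (ω : ℝ → ℝ) (l : ℝ) (j : ℕ) : ℝ :=
  Wseq ω l j / (Nat.factorial j : ℝ)

/-- `h_M(t) = inf_{k ∈ ℕ} M_k t^k`. -/
noncomputable def hFun (M : ℕ → ℝ) (t : ℝ) : ℝ :=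
  ⨅ k : ℕ, M k * t ^ k

/-- The associated function `ω_M(t) = sup_p log (t^p / M_p)` for `t > 0`, `ω_M(0) = 0`. -/
noncomputable def assocWeight (M : ℕ → ℝ) (t : ℝ) : ℝ :=
  if t ≤ 0 then 0 else ⨆ p : ℕ, Real.log (t ^ p / M p)

/-- The upper Legendre conjugate `ω⋆(s) = sup_{t ≥ 0} (ω(t) − s t)`. -/
noncomputable def upperConj (ω : ℝ → ℝ) (s : ℝ) : ℝ :=
  sSup ((fun t : ℝ => ω t - s * t) '' Set.Ici 0)

/-- `(ω⋆)^ι(t) = ω⋆(1/t)` for `t > 0`, with value `0` at `t = 0`. -/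
noncomputable def upperConjIota (ω : ℝ → ℝ) (t : ℝ) : ℝ :=
  if t = 0 then 0 else upperConj ω (1 / t)

/-- The lower Legendre conjugate `(ω^ι)_⋆(t) = inf_{s > 0} (ω(1/s) + t s)`. -/
noncomputable def lowerConjIota (ω : ℝ → ℝ) (t : ℝ) : ℝ :=
  sInf ((fun s : ℝ => ω (1 / s) + t * s) '' Set.Ioi 0)

/-- The unbounded sector `S_γ ⊆ ℂ` of opening `γ π` bisected by direction `0`
(for `0 < γ < 2` it lies in `ℂ`). -/
def sector (γ : ℝ) : Set ℂ :=
  {z : ℂ | z ≠ 0 ∧ |Complex.arg z| < γ * Real.pi / 2}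

/-- `M ∈ LC`: positive, normalized, log-convex, `(M_p)^{1/p} → ∞`. -/
def LCseq (M : ℕ → ℝ) : Prop :=
  (∀ p, 0 < M p) ∧ M 0 = 1 ∧ M 0 ≤ M 1 ∧
  (∀ j : ℕ, 1 ≤ j → M j ^ 2 ≤ M (j - 1) * M (j + 1)) ∧
  Filter.Tendsto (fun p : ℕ => M p ^ ((1 : ℝ) / (p : ℝ))) Filter.atTop Filter.atTop

/-- The partial derivative `∂_i` of a function on `ℝ^d`. -/
noncomputable def partialDeriv {d : ℕ} (i : Fin d)
    (f : EuclideanSpace ℝ (Fin d) → ℂ) : EuclideanSpace ℝ (Fin d) → ℂ :=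
  fun x => fderiv ℝ f x (EuclideanSpace.single i 1)

/-- The iterated partial derivative `∂^j` for a multiindex `j ∈ ℕ^d`. -/
noncomputable def multiDeriv {d : ℕ} (j : Fin d → ℕ)
    (f : EuclideanSpace ℝ (Fin d) → ℂ) : EuclideanSpace ℝ (Fin d) → ℂ :=
  (List.finRange d).foldr (fun i g => (partialDeriv i)^[j i] g) f

end

/-!
Writing `H := (ω^ι)_⋆`, so that `H t = inf_{u > 0} (ω u + t / u)`, both inequalities compare
`H` at a point `t` with `ω` at a near-minimiser `u` of `ω u + t / u`.

If `ω (K^γ u) ≤ c ω u` for large `u`, then evaluating `H (K₁^(γ+1) t)` at `K^γ u` gives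
`H (K₁^(γ+1) t) ≤ max c (K₁^(γ+1) / K^γ) (H t + 1)`, and for `c < K₁ < K` the constant is
`< K₁`; since `H → ∞` the `+ 1` is absorbed. Conversely, if `H (K^δ t) ≤ c H t`, iterating lets
us assume `2c < K`. At `t = u ω u` one has `H t ≤ 2 ω u`, while `H s ≥ min (s / X) (ω X)` for
every `X > 0`; taking `s = K^δ t` and `X = K₁^(δ-1) u` with `K₁^(δ-1)` slightly below
`K^δ / (2c)`, the first term of the minimum is too large, which forces `ω (K₁^(δ-1) u) ≤ 2c ω u`.
-/

variable {ω f : ℝ → ℝ}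

lemma IsWeightFunction.nonneg (hω : IsWeightFunction ω) {t : ℝ} (ht : 0 ≤ t) : 0 ≤ ω t :=
  hω.map_zero ▸ hω.monotoneOn self_mem_Ici ht ht

section LowerConjIota

lemma bddBelow_lowerConjIota_image (hω : IsWeightFunction ω) {t : ℝ} (ht : 0 ≤ t) :
    BddBelow ((fun s : ℝ => ω (1 / s) + t * s) '' Ioi 0) := by
  refine ⟨0, ?_⟩
  rintro _ ⟨s, hs, rfl⟩
  have hs : 0 < s := hs
  exact add_nonneg (hω.nonneg (by positivity)) (by positivity)

lemma lowerConjIota_le_add_div (hω : IsWeightFunction ω) {t u : ℝ} (ht : 0 ≤ t) (hu : 0 < u) :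
    lowerConjIota ω t ≤ ω u + t / u := by
  have h := csInf_le (bddBelow_lowerConjIota_image hω ht) (mem_image_of_mem _ (one_div_pos.2 hu))
  rwa [one_div_one_div, ← div_eq_mul_one_div] at h

lemma exists_add_div_le_lowerConjIota_add_one (ω : ℝ → ℝ) (t : ℝ) :
    ∃ u, 0 < u ∧ ω u + t / u ≤ lowerConjIota ω t + 1 := by
  obtain ⟨_, ⟨s, hs, rfl⟩, hlt⟩ :=
    exists_lt_of_csInf_lt ((Nonempty.of_subtype (s := Ioi (0 : ℝ))).image _)
      (lt_add_one (lowerConjIota ω t))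
  have hs : 0 < s := hs
  refine ⟨1 / s, one_div_pos.2 hs, ?_⟩
  rw [div_div_eq_mul_div, div_one]
  exact hlt.le

lemma lowerConjIota_mul_self_le (hω : IsWeightFunction ω) {u : ℝ} (hu : 0 < u) :
    lowerConjIota ω (u * ω u) ≤ 2 * ω u := by
  have := lowerConjIota_le_add_div hω (mul_nonneg hu.le (hω.nonneg hu.le)) hu
  rwa [mul_div_cancel_left₀ _ hu.ne', ← two_mul] at this

lemma min_div_le_lowerConjIota (hω : IsWeightFunction ω) {t X : ℝ} (ht : 0 ≤ t) (hX : 0 < X) :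
    min (t / X) (ω X) ≤ lowerConjIota ω t := by
  refine le_csInf ((Nonempty.of_subtype (s := Ioi (0 : ℝ))).image _) ?_
  rintro _ ⟨s, hs, rfl⟩
  have hs : 0 < s := hs
  rcases le_or_gt (1 / X) s with h | h
  · have : t / X ≤ t * s := by rw [div_eq_mul_one_div]; gcongr
    have := hω.nonneg (one_div_pos.2 hs).le
    exact (min_le_left _ _).trans (by linarith)
  · have : ω X ≤ ω (1 / s) :=
      hω.monotoneOn hX.le (one_div_pos.2 hs).le ((lt_one_div hs hX).1 h).le
    have : 0 ≤ t * s := by positivity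
    exact (min_le_right _ _).trans (by linarith)

lemma tendsto_lowerConjIota (hω : IsWeightFunction ω) :
    Tendsto (lowerConjIota ω) atTop atTop := by
  refine tendsto_atTop.2 fun b => ?_
  obtain ⟨X, hbX, hX1⟩ :=
    ((hω.tendsto_atTop.eventually_ge_atTop b).and (eventually_ge_atTop 1)).exists
  have hX : 0 < X := one_pos.trans_le hX1
  filter_upwards [eventually_ge_atTop (max 0 (X * b))] with t ht
  have hbt : b ≤ t / X := by rw [le_div_iff₀ hX, mul_comm]; exact le_of_max_le_right ht
  exact (le_min hbt hbX).trans (min_div_le_lowerConjIota hω (le_of_max_le_left ht) hX)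

lemma eventually_le_of_add_div_le_lowerConjIota_add_one (hω : IsWeightFunction ω) (T : ℝ) :
    ∀ᶠ t in atTop, ∀ u, 0 < u → ω u + t / u ≤ lowerConjIota ω t + 1 → T ≤ u := by
  set T' := max T 1
  have hT' : 0 < T' := one_pos.trans_le (le_max_right _ _)
  filter_upwards [eventually_ge_atTop (2 * T' * (ω (2 * T') + 1)), eventually_gt_atTop 0]
    with t ht ht0 u hu hnear
  have hH : lowerConjIota ω t ≤ ω (2 * T') + t / (2 * T') :=
    lowerConjIota_le_add_div hω ht0.le (by positivity)
  have hω2T : ω (2 * T') + 1 ≤ t / (2 * T') := by rwa [le_div_iff₀ (by positivity), mul_comm]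
  have hsplit : t / T' = t / (2 * T') + t / (2 * T') := by ring
  have hωu := hω.nonneg hu.le
  have htu : t / u ≤ t / T' := by linarith
  exact (le_max_left _ _).trans ((div_le_div_iff_of_pos_left ht0 hu hT').1 htu)

lemma eventually_lowerConjIota_mul_le {a b c : ℝ} (hω : IsWeightFunction ω) (ha : 0 < a)
    (hb : 0 ≤ b) (h : ∀ᶠ u in atTop, ω (a * u) ≤ c * ω u) :
    ∀ᶠ t in atTop,
      lowerConjIota ω (b * t) ≤ max c (b / a) * (lowerConjIota ω t + 1) := by
  obtain ⟨T, hT⟩ := h.exists_forall_of_atTop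
  filter_upwards [eventually_le_of_add_div_le_lowerConjIota_add_one hω T, eventually_ge_atTop 0]
    with t hfar ht
  obtain ⟨u, hu, hnear⟩ := exists_add_div_le_lowerConjIota_add_one ω t
  have hωu := hω.nonneg hu.le
  calc lowerConjIota ω (b * t) ≤ ω (a * u) + b * t / (a * u) :=
        lowerConjIota_le_add_div hω (by positivity) (by positivity)
    _ ≤ c * ω u + b / a * (t / u) := by
        rw [mul_div_mul_comm]; gcongr; exact hT u (hfar u hu hnear)
    _ ≤ max c (b / a) * (ω u + t / u) := by
        rw [mul_add]; gcongr; exacts [le_max_left _ _, le_max_right _ _]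
    _ ≤ max c (b / a) * (lowerConjIota ω t + 1) := by gcongr

end LowerConjIota

section Pcond

lemma Pcond.exists_eventually_le_mul {γ : ℝ} (hf : Tendsto f atTop atTop) (h : Pcond f γ) :
    ∃ K, 1 < K ∧ ∃ c, 1 ≤ c ∧ c < K ∧
      ∀ᶠ t in atTop, f (K ^ γ * t) ≤ c * f t := by
  obtain ⟨K, hK, c, hcK, hev⟩ := h
  refine ⟨K, hK, max c 1, le_max_right _ _, max_lt hcK hK, ?_⟩
  filter_upwards [hev, hf.eventually_gt_atTop 0] with t hle hpos
  rw [div_le_iff₀ hpos] at hle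
  exact hle.trans (by gcongr; exact le_max_left _ _)

lemma pcond_of_eventually_le_mul_add_one {γ K c : ℝ} (hf : Tendsto f atTop atTop) (hK : 1 < K)
    (hcK : c < K) (h : ∀ᶠ t in atTop, f (K ^ γ * t) ≤ c * (f t + 1)) : Pcond f γ := by
  obtain ⟨c', hcc', hc'K⟩ := exists_between hcK
  refine ⟨K, hK, c', hc'K, ?_⟩
  filter_upwards [h, hf.eventually_ge_atTop (c / (c' - c)), hf.eventually_gt_atTop 0]
    with t hle hlarge hpos
  rw [div_le_iff₀ (sub_pos.2 hcc')] at hlarge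
  rw [div_le_iff₀ hpos]
  linear_combination hle + hlarge

lemma eventually_pow_mul_le_of_eventually_mul_le {κ c : ℝ} (hκ : 0 < κ) (hc : 0 ≤ c)
    (h : ∀ᶠ t in atTop, f (κ * t) ≤ c * f t) (n : ℕ) :
    ∀ᶠ t in atTop, f (κ ^ n * t) ≤ c ^ n * f t := by
  induction n with
  | zero => simp
  | succ n ih =>
    filter_upwards [(tendsto_id.const_mul_atTop hκ).eventually ih, h] with t hn h1
    calc f (κ ^ (n + 1) * t) = f (κ ^ n * (κ * t)) := by rw [pow_succ, mul_assoc]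
      _ ≤ c ^ n * f (κ * t) := hn
      _ ≤ c ^ n * (c * f t) := by gcongr
      _ = c ^ (n + 1) * f t := by ring

lemma Pcond.lowerConjIota_add_one {γ : ℝ} (hω : IsWeightFunction ω) (hγ : 0 < γ)
    (h : Pcond ω γ) :
    Pcond (lowerConjIota ω) (γ + 1) := by
  obtain ⟨K, hK, c, hc, hcK, hev⟩ := h.exists_eventually_le_mul hω.tendsto_atTop
  obtain ⟨K₁, hcK₁, hK₁K⟩ := exists_between hcK
  have hK₁ : 0 < K₁ := by linarith
  have hratio : K₁ ^ (γ + 1) / K ^ γ < K₁ := by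
    rw [Real.rpow_add_one hK₁.ne', div_lt_iff₀ (by positivity), mul_comm]
    gcongr
  exact pcond_of_eventually_le_mul_add_one (tendsto_lowerConjIota hω) (by linarith)
    (max_lt hcK₁ hratio) (eventually_lowerConjIota_mul_le hω (by positivity) (by positivity) hev)

lemma pcond_sub_one_of_eventually_lowerConjIota_le {δ K c : ℝ} (hω : IsWeightFunction ω)
    (hδ : 1 < δ) (hc : 1 ≤ c) (hcK : 2 * c < K)
    (h : ∀ᶠ t in atTop, lowerConjIota ω (K ^ δ * t) ≤ c * lowerConjIota ω t) :
    Pcond ω (δ - 1) := by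
  have hK : 0 < K := by linarith
  have hδ' : 0 < δ - 1 := sub_pos.2 hδ
  have hroom : (2 * c) ^ (δ - 1) < K ^ δ / (2 * c) := by
    rw [lt_div_iff₀ (by positivity), ← Real.rpow_add_one (by positivity), sub_add_cancel]
    exact Real.rpow_lt_rpow (by positivity) hcK (by linarith)
  obtain ⟨K₁, hcK₁, hK₁⟩ := exists_between <|
    (Real.lt_rpow_inv_iff_of_pos (by positivity) (by positivity) hδ').2 hroom
  have hK₁pos : 0 < K₁ := by linarith
  have hbelow : K₁ ^ (δ - 1) < K ^ δ / (2 * c) :=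
    (Real.lt_rpow_inv_iff_of_pos hK₁pos.le (by positivity) hδ').1 hK₁
  refine pcond_of_eventually_le_mul_add_one hω.tendsto_atTop (by linarith) hcK₁ ?_
  have hlarge := (tendsto_id.atTop_mul_atTop₀ hω.tendsto_atTop).eventually h
  filter_upwards [hlarge, eventually_gt_atTop 0, hω.tendsto_atTop.eventually_gt_atTop 0]
    with u hle hu hωu
  simp only [id] at hle
  have hHt := mul_le_mul_of_nonneg_left (lowerConjIota_mul_self_le hω hu) (by linarith : 0 ≤ c)
  have hmin := min_div_le_lowerConjIota hω (t := K ^ δ * (u * ω u))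
    (by positivity) (by positivity : 0 < K₁ ^ (δ - 1) * u)
  have hfirst : 2 * c * ω u < K ^ δ * (u * ω u) / (K₁ ^ (δ - 1) * u) := by
    rw [lt_div_iff₀ (by positivity)]
    rw [lt_div_iff₀ (by positivity)] at hbelow
    have := mul_lt_mul_of_pos_right hbelow (mul_pos hu hωu)
    linarith
  have hsecond : ω (K₁ ^ (δ - 1) * u) ≤ 2 * c * ω u := by
    by_contra! hgt
    have := (lt_min hfirst hgt).trans_le hmin
    linarith
  calc ω (K₁ ^ (δ - 1) * u) ≤ 2 * c * ω u := hsecond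
    _ ≤ 2 * c * (ω u + 1) := by gcongr; linarith

lemma Pcond.sub_one_of_lowerConjIota {δ : ℝ} (hω : IsWeightFunction ω) (hδ : 1 < δ)
    (h : Pcond (lowerConjIota ω) δ) : Pcond ω (δ - 1) := by
  obtain ⟨K, hK, c, hc, hcK, hev⟩ := h.exists_eventually_le_mul (tendsto_lowerConjIota hω)
  have hcpos : 0 < c := by linarith
  obtain ⟨n, hn⟩ := pow_unbounded_of_one_lt 2 ((one_lt_div hcpos).2 hcK)
  rw [div_pow, lt_div_iff₀ (by positivity)] at hn
  refine pcond_sub_one_of_eventually_lowerConjIota_le hω hδ (one_le_pow₀ hc) hn ?_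
  have := eventually_pow_mul_le_of_eventually_mul_le (by positivity) hcpos.le hev n
  rwa [Real.rpow_pow_comm (by linarith)] at this

end Pcond

section GammaIndex

lemma le_gammaIndex {γ : ℝ} (hγ : 0 < γ) (h : Pcond f γ) :
    ENNReal.ofReal γ ≤ gammaIndex f :=
  le_iSup₂ (f := fun γ (_ : γ ∈ {γ : ℝ | 0 < γ ∧ Pcond f γ}) => ENNReal.ofReal γ)
    γ ⟨hγ, h⟩

lemma gammaIndex_le {a : ENNReal} (h : ∀ γ, 0 < γ → Pcond f γ → ENNReal.ofReal γ ≤ a) :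
    gammaIndex f ≤ a :=
  iSup₂_le fun γ hγ => h γ hγ.1 hγ.2

lemma nonempty_of_gammaIndex_pos (h : 0 < gammaIndex f) :
    {γ : ℝ | 0 < γ ∧ Pcond f γ}.Nonempty := by
  by_contra hempty
  rw [not_nonempty_iff_eq_empty] at hempty
  simp [gammaIndex, hempty] at h

end GammaIndex

/-- Lemma on the lower conjugate: if `γ(ω) > 0` then
`γ(ω) + 1 = γ((ω^ι)_⋆)`. -/
theorem gammaIndex_lowerConjIota
    (ω : ℝ → ℝ) (hω : IsWeightFunction ω) (hγ : 0 < gammaIndex ω) :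
    gammaIndex ω + 1 = gammaIndex (lowerConjIota ω) := by
  apply le_antisymm
  · rw [gammaIndex, ENNReal.biSup_add (nonempty_of_gammaIndex_pos hγ)]
    refine iSup₂_le fun γ ⟨hγpos, hP⟩ => ?_
    rw [← ENNReal.ofReal_one, ← ENNReal.ofReal_add hγpos.le zero_le_one]
    exact le_gammaIndex (by linarith) (hP.lowerConjIota_add_one hω hγpos)
  · refine gammaIndex_le fun δ _ hP => ?_
    rcases le_or_gt δ 1 with hδ | hδ
    · exact (ENNReal.ofReal_le_one.2 hδ).trans le_add_self
    · calc ENNReal.ofReal δ = ENNReal.ofReal (δ - 1) + 1 := by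
            rw [← ENNReal.ofReal_one, ← ENNReal.ofReal_add (by linarith) zero_le_one,
              sub_add_cancel]
        _ ≤ gammaIndex ω + 1 := by
            gcongr; exact le_gammaIndex (by linarith) (hP.sub_one_of_lowerConjIota hω hδ)
end

section
/- Let ω ∈ W_0 with associated weight matrix {W^l : l > 0}. The following are equivalent: (i) ω satisfies (ω_7): there exist H ≥ 1 and C > 0 such that ω(t²) ≤ Cω(Ht) + C for all t ≥ 0; (ii) there exist A ≥ 1 and B ≥ 1 such that for all l > 0 there is C_l ≥ 1 with W^l_{2j} ≤ C_l B^j W^{Al}_j for all j ∈ ℕ; (iii) there exist A ≥ 1 and B ≥ 1 such that for all l > 0 there is C_l ≥ 1 with (W^l_j)² ≤ C_l B^j W^{Al}_j for all j ∈ ℕ. Moreover, if any of these conditions holds then γ(ω) = +∞, i.e. condition (P_{ω,γ}) holds for every γ > 0. -/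
open Filter MeasureTheory Set Asymptotics

/-! Write `φ = ω ∘ exp` (convex, nondecreasing, zero on `(-∞, 0]`) and `φ*` for its conjugate, so that
`(W^l_j)² = exp (2 φ*(l j) / l)`. In these terms `(ω₇)` reads `φ(2y) ≤ C φ(y + b) + C`, and (iii) reads
`2 φ*(x) ≤ c + 2 b x + φ*(A x) / A` for `x ∈ l ℕ`. The two are dual: Fenchel's inequality at `2(y - b)` turns
the first into the second, and conversely a supporting slope `x₀` of `φ` at `2y`, rounded down to the lattice
point `A ⌊x₀ / A⌋`, turns the second back into the first (the linear term in `y` being absorbed by `(ω₃)`).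
Conditions (ii) and (iii) agree because `W^l_{2j} = (W^{2l}_j)²` and `W^l_j` increases with `l`. Finally,
applying `(ω₇)` twice gives `ω(t²) ≤ C ω(t) + C` for large `t`, which dominates every dilation `ω(K^γ t)`. -/

theorem ConvexOn.exists_nonneg_subgradient {f : ℝ → ℝ} (hf : ConvexOn ℝ univ f)
    (hmono : Monotone f) (z : ℝ) : ∃ a, 0 ≤ a ∧ ∀ y, f z + a * (y - z) ≤ f y := by
  set S : Set ℝ := (fun y => (f z - f y) / (z - y)) '' Iio z
  have hslope : ∀ {y y'}, y < z → z < y' → (f z - f y) / (z - y) ≤ (f y' - f z) / (y' - z) :=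
    fun hy hy' => hf.slope_mono_adjacent (mem_univ _) (mem_univ _) hy hy'
  have hbdd : BddAbove S := ⟨f (z + 1) - f z, by
    rintro _ ⟨y, hy, rfl⟩
    simpa using hslope hy (lt_add_one z)⟩
  have hmem : ∀ {y}, y < z → (f z - f y) / (z - y) ≤ sSup S := fun hy => le_csSup hbdd ⟨_, hy, rfl⟩
  refine ⟨sSup S, ?_, fun y => ?_⟩
  · refine le_trans ?_ (hmem (sub_one_lt z))
    simpa using hmono (sub_one_lt z).le
  rcases lt_trichotomy y z with hy | rfl | hy
  · have := (div_le_iff₀ (sub_pos.2 hy)).1 (hmem hy)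
    nlinarith
  · simp
  · have : sSup S ≤ (f y - f z) / (y - z) :=
      csSup_le ⟨_, _, sub_one_lt z, rfl⟩ (by rintro _ ⟨y', hy', rfl⟩; exact hslope hy' hy)
    have := (le_div_iff₀ (sub_pos.2 hy)).1 this
    nlinarith

theorem phiStar_le {ω : ℝ → ℝ} {x M : ℝ} (h : ∀ y, 0 ≤ y → x * y - ω (Real.exp y) ≤ M) :
    phiStar ω x ≤ M :=
  csSup_le ⟨_, 0, self_mem_Ici, rfl⟩ (by rintro _ ⟨y, hy, rfl⟩; exact h y hy)

theorem Wseq_pow (ω : ℝ → ℝ) (l : ℝ) (j n : ℕ) :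
    Wseq ω l j ^ n = Real.exp (n / l * phiStar ω (l * j)) := by
  rw [Wseq, ← Real.exp_nat_mul]
  ring_nf

theorem Wseq_two_mul (ω : ℝ → ℝ) (l : ℝ) (j : ℕ) :
    Wseq ω l (2 * j) = Wseq ω (2 * l) j ^ 2 := by
  rcases eq_or_ne l 0 with rfl | hl
  · simp [Wseq]
  rw [Wseq_pow, Wseq]
  congr 1
  push_cast
  field_simp

theorem Wseq_sq_le_iff (ω : ℝ → ℝ) {l A C B : ℝ} (hC : 0 < C) (hB : 0 < B) (j : ℕ) :
    Wseq ω l j ^ 2 ≤ C * B ^ j * Wseq ω (A * l) j ↔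
      2 / l * phiStar ω (l * j) ≤
        Real.log C + j * Real.log B + 1 / (A * l) * phiStar ω (A * l * j) := by
  have hrhs : C * B ^ j * Wseq ω (A * l) j =
      Real.exp (Real.log C + j * Real.log B + 1 / (A * l) * phiStar ω (A * l * j)) := by
    rw [Real.exp_add, Real.exp_add, Real.exp_nat_mul, Real.exp_log hC, Real.exp_log hB, Wseq]
  rw [hrhs, Wseq_pow, Real.exp_le_exp, Nat.cast_ofNat]

def Omega7 (ω : ℝ → ℝ) : Prop :=
  ∃ H : ℝ, 1 ≤ H ∧ ∃ C : ℝ, 0 < C ∧ ∀ t : ℝ, 0 ≤ t → ω (t ^ 2) ≤ C * ω (H * t) + C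

def WseqIndexDoubling (ω : ℝ → ℝ) : Prop :=
  ∃ A B : ℝ, 1 ≤ A ∧ 1 ≤ B ∧ ∀ l : ℝ, 0 < l → ∃ Cl : ℝ, 1 ≤ Cl ∧
    ∀ j : ℕ, Wseq ω l (2 * j) ≤ Cl * B ^ j * Wseq ω (A * l) j

def WseqSquaring (ω : ℝ → ℝ) : Prop :=
  ∃ A B : ℝ, 1 ≤ A ∧ 1 ≤ B ∧ ∀ l : ℝ, 0 < l → ∃ Cl : ℝ, 1 ≤ Cl ∧
    ∀ j : ℕ, (Wseq ω l j) ^ 2 ≤ Cl * B ^ j * Wseq ω (A * l) j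

namespace InW0

variable {ω : ℝ → ℝ} (hω : InW0 ω)
include hω

theorem nonneg {t : ℝ} (ht : 0 ≤ t) : 0 ≤ ω t :=
  hω.1.map_zero ▸ hω.1.monotoneOn self_mem_Ici ht ht

theorem mono {s t : ℝ} (hs : 0 ≤ s) (h : s ≤ t) : ω s ≤ ω t :=
  hω.1.monotoneOn hs (hs.trans h) h

theorem monotone_comp_exp : Monotone fun y => ω (Real.exp y) := fun _ _ h =>
  hω.mono (Real.exp_pos _).le (Real.exp_le_exp.2 h)

theorem comp_exp_of_nonpos {y : ℝ} (hy : y ≤ 0) : ω (Real.exp y) = 0 :=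
  hω.2.1 _ ⟨(Real.exp_pos y).le, Real.exp_le_one_iff.2 hy⟩

theorem exists_le_mul_comp_exp_add {ε : ℝ} (hε : 0 < ε) :
    ∃ D, 0 ≤ D ∧ ∀ y, y ≤ ε * ω (Real.exp y) + D := by
  obtain ⟨T, hT⟩ := eventually_atTop.1 (hω.2.2.1.def hε)
  refine ⟨max (Real.log T) 0, le_max_right _ _, fun y => ?_⟩
  have hφ := hω.nonneg (Real.exp_pos y).le
  rcases le_total y (max (Real.log T) 0) with hy | hy
  · nlinarith
  · have hTy : T ≤ Real.exp y := by
      calc T ≤ Real.exp (Real.log T) := Real.le_exp_log T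
        _ ≤ Real.exp y := Real.exp_le_exp.2 ((le_max_left _ _).trans hy)
    have := hT _ hTy
    rw [Real.norm_eq_abs, Real.norm_eq_abs, Real.log_exp, abs_of_nonneg hφ] at this
    have := le_abs_self y
    nlinarith [le_max_right (Real.log T) 0]

theorem bddAbove_phiStar {x : ℝ} (hx : 0 ≤ x) :
    BddAbove ((fun y => x * y - ω (Real.exp y)) '' Ici 0) := by
  obtain ⟨D, -, hD⟩ := hω.exists_le_mul_comp_exp_add (inv_pos.2 (add_pos_of_nonneg_of_pos hx one_pos))
  refine ⟨x * D, ?_⟩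
  rintro _ ⟨y, -, rfl⟩
  have hφ := hω.nonneg (Real.exp_pos y).le
  have hxy : x * y ≤ x / (x + 1) * ω (Real.exp y) + x * D := by
    have := mul_le_mul_of_nonneg_left (hD y) hx
    rwa [mul_add, ← mul_assoc, ← div_eq_mul_inv] at this
  have : x / (x + 1) * ω (Real.exp y) ≤ ω (Real.exp y) :=
    mul_le_of_le_one_left hφ ((div_le_one (by linarith)).2 (by linarith))
  simp only
  linarith

theorem le_phiStar {x : ℝ} (hx : 0 ≤ x) (y : ℝ) : x * y - ω (Real.exp y) ≤ phiStar ω x := by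
  rcases le_total 0 y with hy | hy
  · exact le_csSup (hω.bddAbove_phiStar hx) ⟨y, hy, rfl⟩
  · calc x * y - ω (Real.exp y) ≤ x * 0 - ω (Real.exp 0) := by
          rw [hω.comp_exp_of_nonpos hy, hω.comp_exp_of_nonpos le_rfl]
          nlinarith
      _ ≤ phiStar ω x := le_csSup (hω.bddAbove_phiStar hx) ⟨0, self_mem_Ici, rfl⟩

theorem phiStar_mono {x x' : ℝ} (hx : 0 ≤ x) (h : x ≤ x') : phiStar ω x ≤ phiStar ω x' :=
  phiStar_le fun y hy => (sub_le_sub_right (mul_le_mul_of_nonneg_right h hy) _).trans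
    (hω.le_phiStar (hx.trans h) y)

theorem mul_phiStar_le {c x : ℝ} (hc : 1 ≤ c) (hx : 0 ≤ x) :
    c * phiStar ω x ≤ phiStar ω (c * x) := by
  have hc0 : 0 < c := by linarith
  rw [← le_div_iff₀' hc0]
  refine phiStar_le fun y _ => ?_
  rw [le_div_iff₀' hc0]
  have := hω.le_phiStar (mul_nonneg hc0.le hx) y
  nlinarith [hω.nonneg (Real.exp_pos y).le]

theorem Wseq_mono {l l' : ℝ} (hl : 0 < l) (h : l ≤ l') (j : ℕ) : Wseq ω l j ≤ Wseq ω l' j := by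
  have hl' : 0 < l' := hl.trans_le h
  have := hω.mul_phiStar_le ((one_le_div hl).2 h) (mul_nonneg hl.le (Nat.cast_nonneg j))
  rw [show l' / l * (l * j) = l' * j by field_simp] at this
  refine Real.exp_le_exp.2 ?_
  rw [one_div_mul_eq_div, one_div_mul_eq_div, le_div_iff₀ hl']
  exact (div_mul_comm _ _ _).trans_le this

theorem exists_phiStar_le (z : ℝ) : ∃ x, 0 ≤ x ∧ phiStar ω x ≤ x * z - ω (Real.exp z) := by
  obtain ⟨a, ha, hsub⟩ := hω.2.2.2.exists_nonneg_subgradient hω.monotone_comp_exp z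
  exact ⟨a, ha, phiStar_le fun y _ => by linarith [hsub y]⟩

theorem wseqIndexDoubling_iff_wseqSquaring :
    WseqIndexDoubling ω ↔ WseqSquaring ω := by
  constructor
  · rintro ⟨A, B, hA, hB, h⟩
    refine ⟨A, B, hA, hB, fun l hl => ?_⟩
    obtain ⟨Cl, hCl, hj⟩ := h (l / 2) (half_pos hl)
    refine ⟨Cl, hCl, fun j => ?_⟩
    have := hj j
    rw [Wseq_two_mul ω, mul_div_cancel₀ l two_ne_zero] at this
    exact this.trans (by
      gcongr
      exact hω.Wseq_mono (by positivity) (by gcongr; exact half_le_self hl.le) j)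
  · rintro ⟨A, B, hA, hB, h⟩
    refine ⟨2 * A, B, by linarith, hB, fun l hl => ?_⟩
    obtain ⟨Cl, hCl, hj⟩ := h (2 * l) (by positivity)
    refine ⟨Cl, hCl, fun j => ?_⟩
    rw [Wseq_two_mul ω, show 2 * A * l = A * (2 * l) by ring]
    exact hj j

theorem omega7_iff : Omega7 ω ↔ ∃ b, 0 ≤ b ∧ ∃ C, 0 < C ∧
    ∀ y, ω (Real.exp (2 * y)) ≤ C * ω (Real.exp (y + b)) + C := by
  have hsq (y : ℝ) : Real.exp y ^ 2 = Real.exp (2 * y) := by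
    rw [← Real.exp_nat_mul, Nat.cast_ofNat]
  constructor
  · rintro ⟨H, hH, C, hC, h⟩
    refine ⟨Real.log H, Real.log_nonneg hH, C, hC, fun y => ?_⟩
    have := h (Real.exp y) (Real.exp_pos y).le
    rwa [hsq, show H * Real.exp y = Real.exp (y + Real.log H) by
      rw [Real.exp_add, Real.exp_log (by linarith), mul_comm]] at this
  · rintro ⟨b, hb, C, hC, h⟩
    refine ⟨Real.exp b, Real.one_le_exp hb, C, hC, fun t ht => ?_⟩
    rcases lt_or_ge t 1 with ht1 | ht1
    · have hφ := hω.nonneg (mul_nonneg (Real.exp_pos b).le ht)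
      rw [hω.2.1 _ ⟨sq_nonneg t, by nlinarith⟩]
      positivity
    · have := h (Real.log t)
      rwa [← hsq, Real.exp_add, Real.exp_log (by linarith), mul_comm t] at this

theorem exists_two_mul_phiStar_le {b C : ℝ} (hC : 0 ≤ C)
    (h : ∀ y, ω (Real.exp (2 * y)) ≤ C * ω (Real.exp (y + b)) + C) :
    ∃ A, 1 ≤ A ∧ ∀ x, 0 ≤ x → 2 * phiStar ω x ≤ 2 * b * x + 2 + phiStar ω (A * x) / A := by
  refine ⟨C + 1, by linarith, fun x hx => ?_⟩
  have hA : 0 < C + 1 := by linarith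
  rw [← le_div_iff₀' two_pos]
  refine phiStar_le fun y _ => ?_
  have hφ := hω.nonneg (Real.exp_pos y).le
  have hsq : ω (Real.exp (2 * (y - b))) ≤ 2 * (C + 1) * ω (Real.exp y) + 2 * (C + 1) := by
    have := h (y - b)
    rw [sub_add_cancel] at this
    nlinarith [mul_nonneg hC hφ]
  have hF := hω.le_phiStar (mul_nonneg hA.le hx) (2 * (y - b))
  have key : (C + 1) * (2 * (x * y - ω (Real.exp y))) ≤
      (C + 1) * (2 * b * x + 2) + phiStar ω ((C + 1) * x) := by
    linarith
  rw [le_div_iff₀' two_pos]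
  refine le_of_mul_le_mul_left (key.trans_eq ?_) hA
  field_simp

theorem wseqSquaring_of_omega7 (h : Omega7 ω) : WseqSquaring ω := by
  obtain ⟨b, hb, C, hC, h⟩ := hω.omega7_iff.1 h
  obtain ⟨A, hA, hφ⟩ := hω.exists_two_mul_phiStar_le hC.le h
  refine ⟨A, Real.exp (2 * b), hA, Real.one_le_exp (by positivity), fun l hl => ?_⟩
  refine ⟨Real.exp (2 / l), Real.one_le_exp (by positivity), fun j => ?_⟩
  rw [Wseq_sq_le_iff ω (Real.exp_pos _) (Real.exp_pos _), Real.log_exp, Real.log_exp]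
  have := hφ (l * j) (by positivity)
  calc 2 / l * phiStar ω (l * j) = l⁻¹ * (2 * phiStar ω (l * j)) := by ring
    _ ≤ l⁻¹ * (2 * b * (l * j) + 2 + phiStar ω (A * (l * j)) / A) := by gcongr
    _ = 2 / l + j * (2 * b) + 1 / (A * l) * phiStar ω (A * l * j) := by
      field_simp
      ring_nf

theorem exists_comp_exp_two_mul_le {A b c : ℝ} (hA : 0 < A) (hb : 0 ≤ b)
    (h : ∀ j : ℕ, 2 * phiStar ω j ≤ c + 2 * b * j + phiStar ω (A * j) / A) :
    ∃ C, 0 < C ∧ ∀ y, ω (Real.exp (2 * y)) ≤ C * ω (Real.exp (y + b)) + C := by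
  obtain ⟨D, hD, hDy⟩ := hω.exists_le_mul_comp_exp_add one_pos
  refine ⟨4 * A + 2 * A * D + A * |c|, by positivity, fun y => ?_⟩
  have hφ := hω.nonneg (Real.exp_pos (y + b)).le
  rcases lt_or_ge y 0 with hy | hy
  · rw [hω.comp_exp_of_nonpos (by linarith)]
    positivity
  obtain ⟨x₀, hx₀, hsupp⟩ := hω.exists_phiStar_le (2 * y)
  set j := ⌊x₀ / A⌋₊
  have hjx₀ : A * j ≤ x₀ := (le_div_iff₀' hA).1 (Nat.floor_le (by positivity))
  have hx₀j : x₀ ≤ A * (j + 1) := ((div_le_iff₀' hA).1 (Nat.lt_floor_add_one _).le)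
  have hj := h j
  rw [← mul_le_mul_iff_of_pos_left hA, mul_add, mul_div_cancel₀ _ hA.ne'] at hj
  have hmono := hω.phiStar_mono (by positivity) hjx₀
  have hF := hω.le_phiStar (Nat.cast_nonneg j) (y + b)
  have hyb : y ≤ ω (Real.exp (y + b)) + D := by
    linarith [hDy y, hω.monotone_comp_exp (le_add_of_nonneg_right hb : y ≤ y + b)]
  have hx₀y := mul_le_mul_of_nonneg_left hx₀j (by linarith : 0 ≤ 2 * y)
  have hAF := mul_le_mul_of_nonneg_left hF (by linarith : 0 ≤ 2 * A)
  calc ω (Real.exp (2 * y)) ≤ 2 * y * x₀ - phiStar ω x₀ := by linarith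
    _ ≤ 2 * y * (A * (j + 1)) - A * (2 * phiStar ω j) + A * (c + 2 * b * j) := by linarith
    _ ≤ 2 * y * (A * (j + 1)) - 2 * A * (j * (y + b) - ω (Real.exp (y + b)))
        + A * (c + 2 * b * j) := by linarith
    _ = 2 * A * y + 2 * A * ω (Real.exp (y + b)) + A * c := by ring
    _ ≤ (4 * A + 2 * A * D + A * |c|) * ω (Real.exp (y + b)) + (4 * A + 2 * A * D + A * |c|) := by
      nlinarith [le_abs_self c, abs_nonneg c, mul_nonneg hA.le hD, mul_nonneg hA.le hφ]

theorem omega7_of_wseqSquaring (h : WseqSquaring ω) : Omega7 ω := by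
  obtain ⟨A, B, hA, hB, h⟩ := h
  obtain ⟨C₁, hC₁, hj⟩ := h 1 one_pos
  have hlog (j : ℕ) : 2 * phiStar ω j ≤ Real.log C₁ + 2 * (Real.log B / 2) * j
      + phiStar ω (A * j) / A := by
    have := (Wseq_sq_le_iff ω (by positivity) (by positivity) j).1 (hj j)
    simp only [div_one, one_mul, mul_one, one_div_mul_eq_div] at this
    linarith
  obtain ⟨C, hC, hC'⟩ :=
    hω.exists_comp_exp_two_mul_le (by positivity) (by positivity [Real.log_nonneg hB]) hlog
  exact hω.omega7_iff.2 ⟨_, by positivity [Real.log_nonneg hB], C, hC, hC'⟩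

theorem exists_eventually_comp_sq_le (h : Omega7 ω) :
    ∃ C, 0 < C ∧ ∀ᶠ t in atTop, ω (t ^ 2) ≤ C * ω t + C := by
  obtain ⟨H, hH, C, hC, h⟩ := h
  refine ⟨C * C + C, by positivity, ?_⟩
  filter_upwards [eventually_ge_atTop (H ^ 3)] with t ht
  have ht0 : 0 ≤ t := (by positivity : (0:ℝ) ≤ H ^ 3).trans ht
  -- With `s = √(H t)` one has `s² = H t` and `H s ≤ t` as soon as `t ≥ H³`.
  have hHt : ω (H * t) ≤ C * ω t + C := by
    set s := Real.sqrt (H * t)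
    have hs2 : s ^ 2 = H * t := Real.sq_sqrt (by positivity)
    have hHs : H * s ≤ t := by
      refine pow_le_pow_iff_left₀ (by positivity) ht0 two_ne_zero |>.1 ?_
      rw [mul_pow, hs2]
      nlinarith
    have := h s (Real.sqrt_nonneg _)
    rw [hs2] at this
    nlinarith [hω.mono (by positivity) hHs]
  nlinarith [h t ht0, mul_le_mul_of_nonneg_left hHt hC.le, mul_nonneg hC.le (hω.nonneg ht0)]

theorem pcond_of_omega7 (h : Omega7 ω) (γ : ℝ) : Pcond ω γ := by
  obtain ⟨C, hC, hev⟩ := hω.exists_eventually_comp_sq_le h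
  refine ⟨C + 2, by linarith, C + 1, by linarith, ?_⟩
  filter_upwards [hev, eventually_ge_atTop ((C + 2) ^ γ), eventually_ge_atTop 0,
    hω.1.tendsto_atTop.eventually_ge_atTop (C + 1)] with t hsq hKt ht hωt
  have hmono : ω ((C + 2) ^ γ * t) ≤ ω (t ^ 2) :=
    hω.mono (by positivity) (by rw [sq]; gcongr)
  rw [div_le_iff₀ (by linarith)]
  nlinarith

end InW0

theorem gammaIndex_eq_top {ω : ℝ → ℝ} (h : ∀ γ : ℝ, 0 < γ → Pcond ω γ) : gammaIndex ω = ⊤ := by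
  refine eq_top_iff.2 (ENNReal.iSup_natCast ▸ iSup_le fun n => ?_)
  refine le_iSup₂_of_le ((n : ℝ) + 1) ⟨by positivity, h _ (by positivity)⟩ ?_
  rw [← ENNReal.ofReal_natCast]
  exact ENNReal.ofReal_le_ofReal (by linarith)

/-- Appendix, Lemma on `(ω₇)`: characterizations of `(ω₇)` in
terms of the associated weight matrix, and `γ(ω) = +∞` as consequence. -/
theorem omega7_characterization
    (ω : ℝ → ℝ) (hω : InW0 ω) :
    ((∃ H : ℝ, 1 ≤ H ∧ ∃ C : ℝ, 0 < C ∧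
        ∀ t : ℝ, 0 ≤ t → ω (t ^ 2) ≤ C * ω (H * t) + C) ↔
      (∃ A B : ℝ, 1 ≤ A ∧ 1 ≤ B ∧ ∀ l : ℝ, 0 < l → ∃ Cl : ℝ, 1 ≤ Cl ∧
        ∀ j : ℕ, Wseq ω l (2 * j) ≤ Cl * B ^ j * Wseq ω (A * l) j)) ∧
    ((∃ H : ℝ, 1 ≤ H ∧ ∃ C : ℝ, 0 < C ∧
        ∀ t : ℝ, 0 ≤ t → ω (t ^ 2) ≤ C * ω (H * t) + C) ↔
      (∃ A B : ℝ, 1 ≤ A ∧ 1 ≤ B ∧ ∀ l : ℝ, 0 < l → ∃ Cl : ℝ, 1 ≤ Cl ∧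
        ∀ j : ℕ, (Wseq ω l j) ^ 2 ≤ Cl * B ^ j * Wseq ω (A * l) j)) ∧
    ((∃ H : ℝ, 1 ≤ H ∧ ∃ C : ℝ, 0 < C ∧
        ∀ t : ℝ, 0 ≤ t → ω (t ^ 2) ≤ C * ω (H * t) + C) →
      gammaIndex ω = ⊤ ∧ ∀ γ : ℝ, 0 < γ → Pcond ω γ) := by
  have omega7_iff_squaring : Omega7 ω ↔ WseqSquaring ω :=
    ⟨hω.wseqSquaring_of_omega7, hω.omega7_of_wseqSquaring⟩
  refine ⟨omega7_iff_squaring.trans hω.wseqIndexDoubling_iff_wseqSquaring.symm,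
    omega7_iff_squaring, fun h => ?_⟩
  have hP : ∀ γ : ℝ, 0 < γ → Pcond ω γ := fun γ _ => hω.pcond_of_omega7 h γ
  exact ⟨gammaIndex_eq_top hP, hP⟩
end
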